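/- arXiv:2003.07762 — 5 statements merged into one kernel-verified Lean document; each statement's English description precedes it below -/
import Mathlib

section
/- Let r₀ ∈ ℝ and let F : [r₀, ∞) × ℝ → ℝ be continuous and locally Lipschitz in the second variable. Assume that F(r, 1) > 0 and F(r, −1) < 0 for every r ≥ r₀. Then there exists a differentiable function k : [r₀, ∞) → ℝ solving k'(r) = −F(r, k(r)) with k(r₀) = −1, and any such solution satisfies −1 ≤ k(r) ≤ 1 for all r ≥ r₀ and −1 < k(r) < 1 for all r > r₀. -/
/-!
The constants `1` and `-1` are a strict super- and subsolution of `k' = -F(r, k)`: where a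
solution touches `1` its slope `-F(r, 1)` is negative, and where it touches `-1` its slope
`-F(r, -1)` is positive. The fencing theorem therefore keeps every solution starting at `-1` in
`[-1, 1]`, and Fermat's rule at a touching point rules out equality after `r₀`.

For existence, `F` is replaced by its clamp to `[r₀, ∞) × [-1, 1]`. By compactness of `[-1, 1]`
it is globally Lipschitz in the state, uniformly in time, and it is bounded on every strip
`[r₀, T] × ℝ`, so Picard–Lindelöf on `[r₀, r₀ + n]` and uniqueness glue a solution on `[r₀, ∞)`.
That solution is trapped in `[-1, 1]`, where the clamped field is `F`.
-/

open Set Filter Topology NNReal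

theorem le_of_hasDerivWithinAt_Ici_of_deriv_neg_of_eq {k k' : ℝ → ℝ} {a c : ℝ}
    (hk : ∀ x, a ≤ x → HasDerivWithinAt k (k' x) (Ici a) x) (ha : k a ≤ c)
    (hc : ∀ x, a ≤ x → k x = c → k' x < 0) {x : ℝ} (hx : a ≤ x) : k x ≤ c :=
  image_le_of_deriv_right_lt_deriv_boundary (B := fun _ => c) (B' := 0)
    (fun y hy => (hk y hy.1).continuousWithinAt.mono Icc_subset_Ici_self)
    (fun y hy => (hk y hy.1).mono (Ici_subset_Ici.2 hy.1)) ha (fun _ => hasDerivAt_const _ _)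
    (fun y hy => hc y hy.1) ⟨hx, le_rfl⟩

theorem lt_of_hasDerivWithinAt_Ici_of_deriv_neg_of_eq {k k' : ℝ → ℝ} {a c : ℝ}
    (hk : ∀ x, a ≤ x → HasDerivWithinAt k (k' x) (Ici a) x) (ha : k a ≤ c)
    (hc : ∀ x, a ≤ x → k x = c → k' x < 0) {x : ℝ} (hx : a < x) : k x < c := by
  refine (le_of_hasDerivWithinAt_Ici_of_deriv_neg_of_eq hk ha hc hx.le).lt_of_ne fun hkx => ?_
  have hmax : IsLocalMaxOn k (Icc a x) x := eventually_of_mem self_mem_nhdsWithin fun y hy =>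
    hkx ▸ le_of_hasDerivWithinAt_Ici_of_deriv_neg_of_eq hk ha hc hy.1
  have hcone : a - x ∈ posTangentConeAt (Icc a x) x :=
    sub_mem_posTangentConeAt_of_segment_subset (segment_symm ℝ x a ▸ segment_subset_Icc hx.le)
  have := hmax.hasFDerivWithinAt_nonpos
    ((hk x hx.le).mono Icc_subset_Ici_self).hasFDerivWithinAt hcone
  simp only [ContinuousLinearMap.toSpanSingleton_apply, smul_eq_mul] at this
  nlinarith [hc x hx.le hkx]

theorem ode_solution_trapped {r₀ : ℝ} {F : ℝ → ℝ → ℝ}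
    (hFpos : ∀ r, r₀ ≤ r → 0 < F r 1) (hFneg : ∀ r, r₀ ≤ r → F r (-1) < 0)
    {k : ℝ → ℝ} (hk₀ : k r₀ = -1) (hk : ∀ r, r₀ ≤ r → HasDerivWithinAt k (-F r (k r)) (Ici r₀) r) :
    (∀ r, r₀ ≤ r → -1 ≤ k r ∧ k r ≤ 1) ∧ (∀ r, r₀ < r → -1 < k r ∧ k r < 1) := by
  have hupper_start : k r₀ ≤ 1 := by linarith
  have hupper : ∀ r, r₀ ≤ r → k r = 1 → -F r (k r) < 0 := fun r hr h => by
    simpa [h] using hFpos r hr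
  have hneg : ∀ r, r₀ ≤ r → HasDerivWithinAt (-k) (- -F r (k r)) (Ici r₀) r :=
    fun r hr => (hk r hr).neg
  have hlower_start : (-k) r₀ ≤ 1 := by simp [hk₀]
  have hlower : ∀ r, r₀ ≤ r → (-k) r = 1 → - -F r (k r) < 0 := fun r hr h => by
    rw [Pi.neg_apply, neg_eq_iff_eq_neg] at h
    simpa [h] using hFneg r hr
  refine ⟨fun r hr => ⟨?_, ?_⟩, fun r hr => ⟨?_, ?_⟩⟩
  · have := le_of_hasDerivWithinAt_Ici_of_deriv_neg_of_eq hneg hlower_start hlower hr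
    simp only [Pi.neg_apply] at this; linarith
  · exact le_of_hasDerivWithinAt_Ici_of_deriv_neg_of_eq hk hupper_start hupper hr
  · have := lt_of_hasDerivWithinAt_Ici_of_deriv_neg_of_eq hneg hlower_start hlower hr
    simp only [Pi.neg_apply] at this; linarith
  · exact lt_of_hasDerivWithinAt_Ici_of_deriv_neg_of_eq hk hupper_start hupper hr

theorem lipschitzOnWith_of_dist_le_of_sub_lt {E : Type*} [PseudoMetricSpace E] {f : ℝ → E}
    {K : ℝ≥0} {s : Set ℝ} [hs : s.OrdConnected] {δ : ℝ} (hδ : 0 < δ)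
    (h : ∀ x ∈ s, ∀ y ∈ s, x ≤ y → y - x < δ → dist (f x) (f y) ≤ K * (y - x)) :
    LipschitzOnWith K f s := by
  have key : ∀ n : ℕ, ∀ x ∈ s, ∀ y ∈ s, x ≤ y → y - x ≤ n * (δ / 2) →
      dist (f x) (f y) ≤ K * (y - x) := by
    intro n
    induction n with
    | zero =>
      intro x _ y _ hxy hyx
      obtain rfl : x = y := by simp only [CharP.cast_eq_zero, zero_mul] at hyx; linarith
      simp
    | succ n ih =>
      intro x hx y hy hxy hyx
      rcases lt_or_ge (y - x) δ with hclose | hfar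
      · exact h x hx y hy hxy hclose
      have hz : y - δ / 2 ∈ s := hs.out hx hy ⟨by linarith, by linarith⟩
      push_cast at hyx
      calc dist (f x) (f y) ≤ dist (f x) (f (y - δ / 2)) + dist (f (y - δ / 2)) (f y) :=
            dist_triangle _ _ _
        _ ≤ K * (y - δ / 2 - x) + K * (y - (y - δ / 2)) := by
          gcongr
          · exact ih x hx _ hz (by linarith) (by linarith)
          · exact h _ hz y hy (by linarith) (by linarith)
        _ = K * (y - x) := by ring
  refine LipschitzOnWith.of_dist_le_mul fun x hx y hy => ?_
  wlog hxy : x ≤ y generalizing x y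
  · rw [dist_comm, dist_comm x]
    exact this y hy x hx (le_of_not_ge hxy)
  obtain ⟨n, hn⟩ := exists_nat_ge ((y - x) / (δ / 2))
  rw [Real.dist_eq, abs_of_nonpos (by linarith), neg_sub]
  exact key n x hx y hy hxy (by rwa [div_le_iff₀ (by positivity)] at hn)

theorem exists_lipschitzOnWith_Icc_of_forall_mem_nhds {ι E : Type*} [PseudoMetricSpace E]
    {f : ι → ℝ → E} {a b : ℝ}
    (h : ∀ x ∈ Icc a b, ∃ s ∈ 𝓝 x, ∃ K : ℝ≥0, ∀ i, LipschitzOnWith K (f i) s) :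
    ∃ K : ℝ≥0, ∀ i, LipschitzOnWith K (f i) (Icc a b) := by
  choose! s hs Kf hKf using h
  obtain ⟨t, hta, hcover⟩ := isCompact_Icc.elim_nhds_subcover (fun x => interior (s x))
    fun x hx => interior_mem_nhds.2 (hs x hx)
  obtain ⟨δ, hδ, hleb⟩ := lebesgue_number_lemma_of_metric (c := fun z : t => interior (s z))
    isCompact_Icc (fun _ => isOpen_interior) fun x hx => by
      obtain ⟨z, hz, hxz⟩ := mem_iUnion₂.1 (hcover hx)
      exact mem_iUnion.2 ⟨⟨z, hz⟩, hxz⟩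
  refine ⟨t.sup Kf, fun i => lipschitzOnWith_of_dist_le_of_sub_lt hδ
    fun x hx y _ hxy hyx => ?_⟩
  obtain ⟨⟨z, hz⟩, hball⟩ := hleb x hx
  have hxz : x ∈ s z := interior_subset (hball (Metric.mem_ball_self hδ))
  have hyz : y ∈ s z := interior_subset (hball (by
    rwa [Metric.mem_ball, Real.dist_eq, abs_of_nonneg (by linarith)]))
  have := ((hKf z (hta z hz) i).weaken (Finset.le_sup hz)).dist_le_mul x hxz y hyz
  rwa [Real.dist_eq, abs_of_nonpos (by linarith), neg_sub] at this

/-- Agrees with `F` on `[r₀, ∞) × [a, b]`, but is globally Lipschitz and bounded on strips. -/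
noncomputable def clampedField (r₀ : ℝ) {a b : ℝ} (hab : a ≤ b) (F : ℝ → ℝ → ℝ) (t x : ℝ) : ℝ :=
  F (max t r₀) (projIcc a b hab x)

section clampedField

variable {r₀ a b : ℝ} (hab : a ≤ b) {F : ℝ → ℝ → ℝ}

theorem clampedField_of_mem {t x : ℝ} (ht : r₀ ≤ t) (hx : x ∈ Icc a b) :
    clampedField r₀ hab F t x = F t x := by
  rw [clampedField, max_eq_left ht, projIcc_of_mem hab hx]

theorem continuous_clampedField
    (hF : ContinuousOn (fun p : ℝ × ℝ => F p.1 p.2) (Ici r₀ ×ˢ univ)) :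
    Continuous fun p : ℝ × ℝ => clampedField r₀ hab F p.1 p.2 :=
  hF.comp_continuous ((continuous_fst.max continuous_const).prodMk
    (continuous_subtype_val.comp ((continuous_projIcc (h := hab)).comp continuous_snd)))
    fun p => ⟨mem_Ici.2 (le_max_right p.1 r₀), mem_univ _⟩

theorem lipschitzWith_clampedField {K : ℝ≥0}
    (hF : ∀ r, r₀ ≤ r → LipschitzOnWith K (F r) (Icc a b)) (t : ℝ) :
    LipschitzWith K (clampedField r₀ hab F t) := by
  have := (lipschitzOnWith_iff_restrict.1 (hF _ (le_max_right t r₀))).comp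
    (LipschitzWith.projIcc hab)
  rwa [mul_one] at this

theorem exists_forall_norm_clampedField_le
    (hF : ContinuousOn (fun p : ℝ × ℝ => F p.1 p.2) (Ici r₀ ×ˢ univ)) (T : ℝ) :
    ∃ L : ℝ≥0, ∀ t ∈ Icc r₀ T, ∀ x, ‖clampedField r₀ hab F t x‖ ≤ L := by
  obtain ⟨C, hC⟩ := (isCompact_Icc.prod isCompact_Icc).exists_bound_of_continuousOn
    (hF.mono (prod_mono (Icc_subset_Ici_self : Icc r₀ T ⊆ Ici r₀) (subset_univ (Icc a b))))
  refine ⟨C.toNNReal, fun t ht x => ?_⟩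
  rw [clampedField, max_eq_left ht.1]
  exact (hC (t, projIcc a b hab x) ⟨ht, (projIcc a b hab x).2⟩).trans (Real.le_coe_toNNReal C)

end clampedField

section Existence

variable {E : Type*} [NormedAddCommGroup E] [NormedSpace ℝ E] [CompleteSpace E]
  {v : ℝ → E → E} {K : ℝ≥0} {t₀ : ℝ}

theorem exists_forall_mem_Icc_hasDerivWithinAt_of_norm_le {T : ℝ} {L : ℝ≥0} (x₀ : E)
    (hT : t₀ ≤ T) (hlip : ∀ t ∈ Icc t₀ T, LipschitzWith K (v t))
    (hcont : ∀ x, ContinuousOn (v · x) (Icc t₀ T)) (hbdd : ∀ t ∈ Icc t₀ T, ∀ x, ‖v t x‖ ≤ L) :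
    ∃ α : ℝ → E, α t₀ = x₀ ∧ ∀ t ∈ Icc t₀ T, HasDerivWithinAt α (v t (α t)) (Icc t₀ T) t :=
  -- a bound valid on all of `E` lets the Picard–Lindelöf ball be as large as the time span needs
  IsPicardLindelof.exists_eq_forall_mem_Icc_hasDerivWithinAt₀ (t₀ := ⟨t₀, le_rfl, hT⟩)
    (a := L * ⟨T - t₀, sub_nonneg.2 hT⟩) (L := L)
    { lipschitzOnWith := fun t ht => (hlip t ht).lipschitzOnWith
      continuousOn := fun x _ => hcont x
      norm_le := fun t ht x _ => hbdd t ht x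
      mul_max_le := by
        rw [sub_self, max_eq_left (sub_nonneg.2 hT), NNReal.coe_zero, sub_zero]
        exact le_rfl }

theorem exists_forall_hasDerivWithinAt_Ici_of_norm_le (x₀ : E)
    (hlip : ∀ t, t₀ ≤ t → LipschitzWith K (v t)) (hcont : ∀ x, ContinuousOn (v · x) (Ici t₀))
    (hbdd : ∀ T, ∃ L : ℝ≥0, ∀ t ∈ Icc t₀ T, ∀ x, ‖v t x‖ ≤ L) :
    ∃ α : ℝ → E, α t₀ = x₀ ∧ ∀ t, t₀ ≤ t → HasDerivWithinAt α (v t (α t)) (Ici t₀) t := by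
  have hloc (n : ℕ) : ∃ α : ℝ → E, α t₀ = x₀ ∧ ∀ t ∈ Icc t₀ (t₀ + n),
      HasDerivWithinAt α (v t (α t)) (Icc t₀ (t₀ + n)) t :=
    have ⟨_, hL⟩ := hbdd (t₀ + n)
    exists_forall_mem_Icc_hasDerivWithinAt_of_norm_le x₀ (by linarith [n.cast_nonneg (α := ℝ)])
      (fun t ht => hlip t ht.1) (fun x => (hcont x).mono Icc_subset_Ici_self) hL
  choose α hα₀ hα using hloc
  have hα_right (n : ℕ) (t : ℝ) (ht : t ∈ Ico t₀ (t₀ + n)) :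
      HasDerivWithinAt (α n) (v t (α n t)) (Ici t) t :=
    (hα n t (Ico_subset_Icc_self ht)).mono_of_mem_nhdsWithin (Icc_mem_nhdsGE_of_mem ht)
  have hagree {m n : ℕ} (hmn : m ≤ n) : EqOn (α m) (α n) (Icc t₀ (t₀ + m)) := by
    have hmn' : t₀ + m ≤ t₀ + n := by simpa using (Nat.cast_le (α := ℝ)).2 hmn
    have hsub : Icc t₀ (t₀ + m) ⊆ Icc t₀ (t₀ + n) := Icc_subset_Icc_right hmn'
    exact ODE_solution_unique_of_mem_Icc_right (s := fun _ => univ)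
      (fun t ht => (hlip t ht.1).lipschitzOnWith)
      (fun t ht => (hα m t ht).continuousWithinAt) (hα_right m) (fun _ _ => trivial)
      (fun t ht => ((hα n t (hsub ht)).continuousWithinAt).mono hsub)
      (fun t ht => hα_right n t ⟨ht.1, ht.2.trans_le hmn'⟩)
      (fun _ _ => trivial) (by rw [hα₀, hα₀])
  let N : ℝ → ℕ := fun t => ⌈t - t₀⌉₊ + 1
  have hN (t : ℝ) : t < t₀ + N t := by
    have := Nat.le_ceil (t - t₀)
    simp only [N, Nat.cast_add, Nat.cast_one]
    linarith
  have heq (n : ℕ) : EqOn (fun t => α (N t) t) (α n) (Icc t₀ (t₀ + n)) := fun t ht =>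
    (hagree (le_max_left (N t) n) ⟨ht.1, (hN t).le⟩).trans
      (hagree (le_max_right (N t) n) ht).symm
  refine ⟨fun t => α (N t) t, by simpa using hα₀ (N t₀), fun t ht => ?_⟩
  have hnhds : Icc t₀ (t₀ + N t) ∈ 𝓝[Ici t₀] t :=
    Ici_inter_Iic (a := t₀) ▸ inter_mem_nhdsWithin _ (Iic_mem_nhds (hN t))
  exact ((hα (N t) t ⟨ht, (hN t).le⟩).mono_of_mem_nhdsWithin hnhds).congr_of_eventuallyEq
    (eventually_of_mem hnhds (heq (N t))) rfl

end Existence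

/-- Trapping argument underlying Lemma 3.4 of the paper: if `F : [r₀,∞) × ℝ → ℝ`
is continuous and locally Lipschitz in the second variable, with `F(r, 1) > 0`
and `F(r, -1) < 0` for all `r ≥ r₀`, then the initial value problem
`k' = -F(r, k)`, `k(r₀) = -1` has a global solution on `[r₀, ∞)`, and any such
solution satisfies `-1 ≤ k ≤ 1` on `[r₀, ∞)` and `-1 < k < 1` on `(r₀, ∞)`. -/
theorem ode_existence_and_trapping
    (r₀ : ℝ) (F : ℝ → ℝ → ℝ)
    (hFcont : ContinuousOn (fun p : ℝ × ℝ => F p.1 p.2) (Ici r₀ ×ˢ univ))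
    (hFlip : ∀ x : ℝ, ∃ s ∈ nhds x, ∃ K : NNReal,
      ∀ r, r₀ ≤ r → LipschitzOnWith K (F r) s)
    (hFpos : ∀ r, r₀ ≤ r → 0 < F r 1)
    (hFneg : ∀ r, r₀ ≤ r → F r (-1) < 0) :
    (∃ k : ℝ → ℝ, k r₀ = -1 ∧
      ∀ r, r₀ ≤ r → HasDerivWithinAt k (-F r (k r)) (Ici r₀) r) ∧
    (∀ k : ℝ → ℝ, k r₀ = -1 →
      (∀ r, r₀ ≤ r → HasDerivWithinAt k (-F r (k r)) (Ici r₀) r) →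
      (∀ r, r₀ ≤ r → -1 ≤ k r ∧ k r ≤ 1) ∧
      (∀ r, r₀ < r → -1 < k r ∧ k r < 1)) := by
  have hab : (-1 : ℝ) ≤ 1 := by norm_num
  obtain ⟨K, hK⟩ := exists_lipschitzOnWith_Icc_of_forall_mem_nhds (a := -1) (b := 1)
    (f := fun r : Ici r₀ => F r) fun x _ =>
      have ⟨s, hs, K, hK⟩ := hFlip x
      ⟨s, hs, K, fun r => hK r r.2⟩
  set G := clampedField r₀ hab F
  have hGcont := continuous_clampedField hab hFcont
  obtain ⟨k, hk₀, hk⟩ := exists_forall_hasDerivWithinAt_Ici_of_norm_le (v := fun t x => -G t x)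
    (K := K) (t₀ := r₀) (-1)
    (fun t _ => (lipschitzWith_clampedField hab (fun r hr => hK ⟨r, hr⟩) t).neg)
    (fun x => (hGcont.comp (continuous_id.prodMk continuous_const)).neg.continuousOn)
    fun T => (exists_forall_norm_clampedField_le hab hFcont T).imp fun _ hL t ht x =>
      (norm_neg _).trans_le (hL t ht x)
  have hGF {r x : ℝ} (hr : r₀ ≤ r) (hx : x ∈ Icc (-1) 1) : G r x = F r x :=
    clampedField_of_mem hab hr hx
  have hk_trapped := ode_solution_trapped (F := G)
    (fun r hr => hGF hr ⟨hab, le_rfl⟩ ▸ hFpos r hr)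
    (fun r hr => hGF hr ⟨le_rfl, hab⟩ ▸ hFneg r hr) hk₀ hk
  refine ⟨⟨k, hk₀, fun r hr => ?_⟩, fun k hk₀ hk => ode_solution_trapped hFpos hFneg hk₀ hk⟩
  rw [← hGF hr (hk_trapped.1 r hr)]
  exact hk r hr
end

section
/- Let ε ∈ (0,1), r₀ > 0, C₀ > 0, and let p : [r₀, ∞) → ℝ be a continuous function with |p(r)| ≤ C₀ r^{−4+ε/2} for all r ≥ r₀. If k₁ : [r₀, ∞) → ℝ is differentiable and satisfies k₁'(r) + 4 k₁(r)/r + 1/r³ = p(r) for all r ≥ r₀, then there exists a constant C > 0 such that |k₁(r) + 1/(2r²)| ≤ C r^{−3+ε/2} for all r ≥ r₀. -/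
/-!
Multiplying the equation by the integrating factor `r⁴` turns it into
`(r⁴ k₁ + r²/2)' = r⁴ p`, whose right-hand side is `O(r^{ε/2})`. By the mean value theorem
`r⁴ k₁ + r²/2 = O(r^{1+ε/2})`, and dividing by `r⁴` gives the claim.
-/

open Set

lemma hasDerivWithinAt_pow_four_mul_add_sq_div_two {k : ℝ → ℝ} {q r : ℝ} {s : Set ℝ}
    (hr : r ≠ 0) (hk : HasDerivWithinAt k (q - 4 * k r / r - 1 / r ^ 3) s r) :
    HasDerivWithinAt (fun t => t ^ 4 * k t + t ^ 2 / 2) (r ^ 4 * q) s r := by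
  have hpow4 : HasDerivWithinAt (fun t : ℝ => t ^ 4) (4 * r ^ 3) s r := by
    simpa using (hasDerivAt_pow 4 r).hasDerivWithinAt
  have hsq : HasDerivWithinAt (fun t : ℝ => t ^ 2 / 2) r s r := by
    simpa using ((hasDerivAt_pow 2 r).hasDerivWithinAt (s := s)).div_const 2
  exact ((hpow4.mul hk).add hsq).congr_deriv (by field_simp; ring)

lemma abs_le_mul_rpow_add_one_of_abs_deriv_le {f f' : ℝ → ℝ} {a α C : ℝ}
    (ha : 0 < a) (hα : 0 ≤ α) (hC : 0 ≤ C)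
    (hf : ∀ t, a ≤ t → HasDerivWithinAt f (f' t) (Ici a) t)
    (hf' : ∀ t, a ≤ t → |f' t| ≤ C * t ^ α) (r : ℝ) (hr : a ≤ r) :
    |f r| ≤ (|f a| / a ^ (α + 1) + C) * r ^ (α + 1) := by
  have hr0 : 0 < r := ha.trans_le hr
  have hderiv_le : ∀ t ∈ Icc a r, ‖f' t‖ ≤ C * r ^ α := fun t ht =>
    (hf' t ht.1).trans <| by gcongr; exacts [(ha.trans_le ht.1).le, ht.2]
  have hmvt : ‖f r - f a‖ ≤ C * r ^ α * ‖r - a‖ :=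
    (convex_Icc a r).norm_image_sub_le_of_norm_hasDerivWithin_le
      (fun t ht => (hf t ht.1).mono Icc_subset_Ici_self) hderiv_le
      (left_mem_Icc.2 hr) (right_mem_Icc.2 hr)
  have hinit : |f a| ≤ |f a| / a ^ (α + 1) * r ^ (α + 1) := by
    rw [div_mul_eq_mul_div, le_div_iff₀ (by positivity)]
    gcongr
  calc |f r| ≤ |f a| + C * r ^ α * (r - a) := by
        rw [Real.norm_eq_abs, Real.norm_eq_abs, abs_of_nonneg (sub_nonneg.2 hr)] at hmvt
        linarith [abs_sub_abs_le_abs_sub (f r) (f a)]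
    _ ≤ |f a| / a ^ (α + 1) * r ^ (α + 1) + C * r ^ (α + 1) := by
        have hCa : 0 ≤ C * r ^ α * a := by positivity
        rw [Real.rpow_add_one hr0.ne'] at hinit ⊢
        linarith
    _ = (|f a| / a ^ (α + 1) + C) * r ^ (α + 1) := by ring

theorem linear_ode_asymptotics_step2_general
    (ε r₀ C₀ : ℝ) (hε : 0 < ε) (hr₀ : 0 < r₀) (hC₀ : 0 < C₀)
    (p : ℝ → ℝ)
    (hp : ∀ r, r₀ ≤ r → |p r| ≤ C₀ * r ^ ((-4 : ℝ) + ε / 2))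
    (k₁ : ℝ → ℝ)
    (hk : ∀ r, r₀ ≤ r →
      HasDerivWithinAt k₁ (p r - 4 * k₁ r / r - 1 / r ^ 3) (Set.Ici r₀) r) :
    ∃ C > 0, ∀ r, r₀ ≤ r →
      |k₁ r + 1 / (2 * r ^ 2)| ≤ C * r ^ ((-3 : ℝ) + ε / 2) := by
  set g : ℝ → ℝ := fun r => r ^ 4 * k₁ r + r ^ 2 / 2
  have hg : ∀ t, r₀ ≤ t → HasDerivWithinAt g (t ^ 4 * p t) (Ici r₀) t := fun t ht =>
    hasDerivWithinAt_pow_four_mul_add_sq_div_two (hr₀.trans_le ht).ne' (hk t ht)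
  have hg' : ∀ t, r₀ ≤ t → |t ^ 4 * p t| ≤ C₀ * t ^ (ε / 2) := fun t ht => by
    have ht0 : 0 < t := hr₀.trans_le ht
    calc |t ^ 4 * p t| ≤ t ^ 4 * (C₀ * t ^ ((-4 : ℝ) + ε / 2)) := by
          rw [abs_mul, abs_of_pos (by positivity)]; gcongr; exact hp t ht
      _ = C₀ * t ^ (ε / 2) := by
          rw [mul_left_comm, ← Real.rpow_natCast, ← Real.rpow_add ht0]; norm_num
  refine ⟨|g r₀| / r₀ ^ (ε / 2 + 1) + C₀, by positivity, fun r hr => ?_⟩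
  have hr0 : 0 < r := hr₀.trans_le hr
  have hk₁ : k₁ r + 1 / (2 * r ^ 2) = g r / r ^ 4 := by field_simp; ring
  have hpow : r ^ ((-3 : ℝ) + ε / 2) = r ^ (ε / 2 + 1) / r ^ 4 := by
    rw [eq_div_iff (by positivity), ← Real.rpow_natCast, ← Real.rpow_add hr0]; norm_num; ring_nf
  rw [hk₁, hpow, abs_div, abs_of_pos (by positivity : (0 : ℝ) < r ^ 4), ← mul_div_assoc]
  gcongr
  exact abs_le_mul_rpow_add_one_of_abs_deriv_le hr₀ (by positivity) hC₀.le hg hg' r hr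

/-- Step 2 in the proof of Lemma 3.5 of the paper: if `p` is continuous on
`[r₀,∞)` with `|p(r)| ≤ C₀ r^{-4+ε/2}` and `k₁` is differentiable with
`k₁'(r) + 4k₁(r)/r + 1/r³ = p(r)` for `r ≥ r₀`, then
`k₁(r) = -1/(2r²) + O(r^{-3+ε/2})`. -/
theorem linear_ode_asymptotics_step2
    (ε r₀ C₀ : ℝ) (hε : 0 < ε) (hε1 : ε < 1) (hr₀ : 0 < r₀) (hC₀ : 0 < C₀)
    (p : ℝ → ℝ) (hp_cont : ContinuousOn p (Set.Ici r₀))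
    (hp : ∀ r, r₀ ≤ r → |p r| ≤ C₀ * r ^ ((-4 : ℝ) + ε / 2))
    (k₁ : ℝ → ℝ)
    (hk : ∀ r, r₀ ≤ r →
      HasDerivWithinAt k₁ (p r - 4 * k₁ r / r - 1 / r ^ 3) (Set.Ici r₀) r) :
    ∃ C > 0, ∀ r, r₀ ≤ r →
      |k₁ r + 1 / (2 * r ^ 2)| ≤ C * r ^ ((-3 : ℝ) + ε / 2) :=
  linear_ode_asymptotics_step2_general ε r₀ C₀ hε hr₀ hC₀ p hp k₁ hk
end

section
/- Let ε ∈ (0,1), α ∈ ℝ, r₀ > 1, C₀ > 0, and let k : [r₀, ∞) → (−1, 1) be a continuous function with |k(r) − r/√(1+r²) − α r⁻³| ≤ C₀ r^{−4+ε} for all r ≥ r₀. Define ψ(r) = k(r)/√((1 − k(r)²)(1 + r²)). Then there is a constant C > 0 such that |ψ(r) − 1 − α/r| ≤ C r^{−2+ε} for all r ≥ r₀; consequently, any antiderivative φ of ψ on [r₀, ∞) satisfies φ(r) = r + α ln r + c + O(r^{−1+ε}) as r → ∞, for some constant c ∈ ℝ. -/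
/-!
Put `y = r / √(1 + r²)` and `w = k² (1 + r²) - r²`. Then `(1 - k²)(1 + r²) = 1 - w`, so
`ψ = k / √(1 - w)`, and since `y² (1 + r²) = r²`, `w = (1 + r²)(k + y)(k - y) = O(r⁻¹)` because
`k - y = O(r⁻³)`. Expanding `1 / √(1 - w) = 1 + w / 2 + O(w²)` gives
`ψ - 1 - α / r = k · O(w²) + (k - 1)(1 + w / 2) + (w / 2 - α / r)`, where `k - 1 = O(r⁻²)` and
`w / 2 - α / r = (1 + r²) (k + y) / 2 · (k - y - α / r³) + O(r⁻³) = O(r^(-2+ε))`.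
Continuity extends this bound at infinity to all of `[r₀, ∞)`.

Then `g = φ - r - α log r` has `|g'| ≤ C r^(-2+ε) = -m'` for `m = C / (1 - ε) · r^(-1+ε) ≥ 0`,
so `g - m` increases, `g + m` decreases, and any `c` between `sup (g - m)` and `inf (g + m)`
satisfies `|g - c| ≤ m`.
-/

open Real Set Filter Asymptotics Topology

theorem rpow_isBigO_rpow_atTop {p q : ℝ} (hpq : p ≤ q) :
    (fun x : ℝ => x ^ p) =O[atTop] fun x => x ^ q :=
  IsBigO.of_bound 1 <| (eventually_ge_atTop 1).mono fun x hx => by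
    rw [one_mul, norm_of_nonneg (by positivity), norm_of_nonneg (by positivity)]
    exact rpow_le_rpow_of_exponent_le hx hpq

theorem Asymptotics.IsBigO.mul_rpow {f g : ℝ → ℝ} {p q s : ℝ}
    (hf : f =O[atTop] fun x => x ^ p) (hg : g =O[atTop] fun x => x ^ q) (hs : p + q ≤ s) :
    (fun x => f x * g x) =O[atTop] fun x => x ^ s :=
  ((hf.mul hg).trans_eventuallyEq <|
    (eventually_gt_atTop 0).mono fun _ hx => (rpow_add hx p q).symm).trans
    (rpow_isBigO_rpow_atTop hs)

theorem const_isBigO_rpow_zero (c : ℝ) : (fun _ : ℝ => c) =O[atTop] fun x => x ^ (0 : ℝ) := by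
  simpa only [rpow_zero] using isBigO_const_const c one_ne_zero atTop

theorem isBigO_rpow_zero_of_sub_const {f : ℝ → ℝ} {c p : ℝ} (hp : p ≤ 0)
    (hf : (fun x => f x - c) =O[atTop] fun x => x ^ p) : f =O[atTop] fun x => x ^ (0 : ℝ) :=
  ((hf.trans (rpow_isBigO_rpow_atTop hp)).add (const_isBigO_rpow_zero c)).congr_left
    fun x => by ring

theorem div_pow_isBigO_rpow (c : ℝ) (n : ℕ) :
    (fun x : ℝ => c / x ^ n) =O[atTop] fun x => x ^ (-(n : ℝ)) :=
  (isBigO_const_mul_self c _ atTop).congr' ((eventually_gt_atTop 0).mono fun x hx => by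
    simp only [rpow_neg hx.le, rpow_natCast, div_eq_mul_inv]) EventuallyEq.rfl

theorem one_add_sq_isBigO_rpow : (fun x : ℝ => 1 + x ^ 2) =O[atTop] fun x => x ^ (2 : ℝ) :=
  IsBigO.of_bound 2 <| (eventually_ge_atTop 1).mono fun x hx => by
    rw [rpow_two, norm_of_nonneg (by positivity), norm_of_nonneg (by positivity)]
    nlinarith

theorem inv_sqrt_one_sub_sub_isBigO :
    (fun w : ℝ => (√(1 - w))⁻¹ - 1 - w / 2) =O[𝓝 0] fun w => w ^ 2 := by
  refine IsBigO.of_bound 2 ?_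
  filter_upwards [Icc_mem_nhds (by norm_num : (-1/2 : ℝ) < 0) (by norm_num : (0 : ℝ) < 1/2)]
    with w ⟨hw₁, hw₂⟩
  set s := √(1 - w)
  have hs2 : s ^ 2 = 1 - w := sq_sqrt (by linarith)
  have hs : 1/2 ≤ s := by nlinarith [sqrt_nonneg (1 - w)]
  have hs' : s ≤ 2 := by nlinarith [sqrt_nonneg (1 - w)]
  have hexp : s⁻¹ - 1 - w / 2 = w ^ 2 * ((2 + s) / (2 * s * (1 + s) ^ 2)) := by
    rw [show w = (1 - s) * (1 + s) by linear_combination hs2]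
    field_simp
    ring
  rw [hexp, Real.norm_eq_abs, Real.norm_eq_abs, abs_mul, abs_of_nonneg (sq_nonneg w),
    abs_of_nonneg (by positivity), mul_comm]
  gcongr
  rw [div_le_iff₀ (by positivity)]
  nlinarith

theorem exists_forall_abs_le_mul_of_isBigO {f g : ℝ → ℝ} {a : ℝ} (hf : ContinuousOn f (Ici a))
    (hg : ContinuousOn g (Ici a)) (hg_pos : ∀ x ∈ Ici a, 0 < g x) (hfg : f =O[atTop] g) :
    ∃ C > 0, ∀ x ∈ Ici a, |f x| ≤ C * g x := by
  obtain ⟨c, hc_pos, hc⟩ := hfg.exists_pos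
  obtain ⟨N, hN⟩ := eventually_atTop.1 hc.bound
  obtain ⟨M, hM⟩ := isCompact_Icc.exists_bound_of_continuousOn
    ((hf.div hg fun x hx => (hg_pos x hx).ne').mono (Icc_subset_Ici_self : Icc a N ⊆ Ici a))
  refine ⟨max c M, lt_max_of_lt_left hc_pos, fun x hx => ?_⟩
  rcases le_total N x with hNx | hxN
  · have := hN x hNx
    rw [norm_of_nonneg (hg_pos x hx).le, Real.norm_eq_abs] at this
    exact this.trans (mul_le_mul_of_nonneg_right (le_max_left _ _) (hg_pos x hx).le)
  · have := hM x ⟨hx, hxN⟩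
    rw [Real.norm_eq_abs, Pi.div_apply, abs_div, abs_of_pos (hg_pos x hx),
      div_le_iff₀ (hg_pos x hx)] at this
    exact this.trans (mul_le_mul_of_nonneg_right (le_max_right _ _) (hg_pos x hx).le)

theorem exists_forall_mem_Icc_of_monotoneOn_of_antitoneOn {α β : Type*} [LinearOrder α]
    [ConditionallyCompleteLattice β] {D : Set α} {u v : α → β}
    (hv : MonotoneOn v D) (hu : AntitoneOn u D) (hvu : ∀ x ∈ D, v x ≤ u x) :
    ∃ c, ∀ x ∈ D, c ∈ Icc (v x) (u x) := by
  have hv_le_u : ∀ x ∈ D, ∀ y ∈ D, v x ≤ u y := fun x hx y hy =>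
    (le_total x y).elim (fun h => (hv hx hy h).trans (hvu y hy))
      (fun h => (hvu x hx).trans (hu hy hx h))
  have hbound : ∀ x ∈ D, ∀ b ∈ v '' D, b ≤ u x := by
    rintro x hx _ ⟨y, hy, rfl⟩
    exact hv_le_u y hy x hx
  exact ⟨sSup (v '' D), fun x hx => ⟨le_csSup ⟨u x, hbound x hx⟩ (mem_image_of_mem v hx),
    csSup_le ⟨v x, mem_image_of_mem v hx⟩ (hbound x hx)⟩⟩

theorem exists_forall_abs_sub_le_of_abs_deriv_le {D : Set ℝ} (hD : Convex ℝ D)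
    {g g' m m' : ℝ → ℝ} (hg : ∀ x ∈ D, HasDerivWithinAt g (g' x) D x)
    (hm : ∀ x ∈ D, HasDerivWithinAt m (m' x) D x) (hm_nonneg : ∀ x ∈ D, 0 ≤ m x)
    (hg'm' : ∀ x ∈ D, |g' x| ≤ -m' x) :
    ∃ c, ∀ x ∈ D, |g x - c| ≤ m x := by
  have hv : MonotoneOn (g - m) D := by
    refine monotoneOn_of_hasDerivWithinAt_nonneg (f' := g' - m') hD
      (fun x hx => ((hg x hx).sub (hm x hx)).continuousWithinAt)
      (fun x hx => ((hg x (interior_subset hx)).sub (hm x (interior_subset hx))).mono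
        interior_subset) fun x hx => ?_
    have := neg_abs_le (g' x) |>.trans' (neg_le_neg (hg'm' x (interior_subset hx)))
    simp only [Pi.sub_apply]
    linarith
  have hu : AntitoneOn (g + m) D := by
    refine antitoneOn_of_hasDerivWithinAt_nonpos (f' := g' + m') hD
      (fun x hx => ((hg x hx).add (hm x hx)).continuousWithinAt)
      (fun x hx => ((hg x (interior_subset hx)).add (hm x (interior_subset hx))).mono
        interior_subset) fun x hx => ?_
    have := (le_abs_self (g' x)).trans (hg'm' x (interior_subset hx))
    simp only [Pi.add_apply]
    linarith
  obtain ⟨c, hc⟩ := exists_forall_mem_Icc_of_monotoneOn_of_antitoneOn hv hu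
    fun x hx => by simp only [Pi.sub_apply, Pi.add_apply]; linarith [hm_nonneg x hx]
  refine ⟨c, fun x hx => abs_sub_le_iff.2 ?_⟩
  obtain ⟨hvc, hcu⟩ := hc x hx
  simp only [Pi.sub_apply, Pi.add_apply] at hvc hcu
  constructor <;> linarith

theorem div_sqrt_one_add_sq_sq_mul (r : ℝ) : (r / √(1 + r ^ 2)) ^ 2 * (1 + r ^ 2) = r ^ 2 := by
  rw [div_pow, sq_sqrt (by positivity)]
  field_simp

theorem one_sub_div_sqrt_one_add_sq_isBigO :
    (fun x : ℝ => 1 - x / √(1 + x ^ 2)) =O[atTop] fun x => x ^ (-2 : ℝ) := by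
  refine IsBigO.of_bound 1 <| (eventually_gt_atTop 0).mono fun x hx => ?_
  have hS : x < √(1 + x ^ 2) := lt_sqrt_of_sq_lt (by linarith)
  have hS2 : √(1 + x ^ 2) ^ 2 = 1 + x ^ 2 := sq_sqrt (by positivity)
  have hxS : x / √(1 + x ^ 2) ≤ 1 := (div_le_one (by linarith)).2 hS.le
  have hy2 : (x / √(1 + x ^ 2)) ^ 2 = 1 - (1 + x ^ 2)⁻¹ := by
    rw [div_pow, hS2]; field_simp; ring
  have hy0 : 0 ≤ x / √(1 + x ^ 2) := by positivity
  rw [one_mul, Real.norm_eq_abs, abs_of_nonneg (by linarith), norm_of_nonneg (by positivity),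
    rpow_neg hx.le, rpow_two]
  calc 1 - x / √(1 + x ^ 2) ≤ 1 - (x / √(1 + x ^ 2)) ^ 2 := by nlinarith
    _ = (1 + x ^ 2)⁻¹ := by rw [hy2]; ring
    _ ≤ (x ^ 2)⁻¹ := inv_anti₀ (by positivity) (by linarith)

theorem ContinuousOn.div_sqrt_one_sub_sq_mul {k : ℝ → ℝ} {s : Set ℝ} (hk : ContinuousOn k s)
    (hk_mem : ∀ r ∈ s, k r ∈ Ioo (-1 : ℝ) 1) :
    ContinuousOn (fun r => k r / √((1 - k r ^ 2) * (1 + r ^ 2))) s := by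
  refine hk.div (by fun_prop) fun r hr => (sqrt_pos.2 (mul_pos ?_ (by positivity))).ne'
  obtain ⟨h₁, h₂⟩ := hk_mem r hr
  nlinarith

section Slope

variable {k : ℝ → ℝ} {α ε : ℝ}

theorem sub_div_sqrt_isBigO (hε : ε ≤ 1)
    (hk : (fun r => k r - r / √(1 + r ^ 2) - α / r ^ 3) =O[atTop] fun r => r ^ (-4 + ε)) :
    (fun r => k r - r / √(1 + r ^ 2)) =O[atTop] fun r => r ^ (-3 : ℝ) := by
  refine ((hk.trans (rpow_isBigO_rpow_atTop (by linarith))).add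
    (by simpa using div_pow_isBigO_rpow α 3)).congr_left fun r => ?_
  ring

theorem sub_one_isBigO (hε : ε ≤ 1)
    (hk : (fun r => k r - r / √(1 + r ^ 2) - α / r ^ 3) =O[atTop] fun r => r ^ (-4 + ε)) :
    (fun r => k r - 1) =O[atTop] fun r => r ^ (-2 : ℝ) := by
  refine (((sub_div_sqrt_isBigO hε hk).trans (rpow_isBigO_rpow_atTop (by norm_num))).sub
    one_sub_div_sqrt_one_add_sq_isBigO).congr_left fun r => ?_
  ring

theorem add_div_sqrt_half_sub_one_isBigO (hε : ε ≤ 1)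
    (hk : (fun r => k r - r / √(1 + r ^ 2) - α / r ^ 3) =O[atTop] fun r => r ^ (-4 + ε)) :
    (fun r => (k r + r / √(1 + r ^ 2)) / 2 - 1) =O[atTop] fun r => r ^ (-2 : ℝ) := by
  refine (((sub_one_isBigO hε hk).sub one_sub_div_sqrt_one_add_sq_isBigO).const_mul_left
    (1 / 2)).congr_left fun r => ?_
  ring

theorem sq_mul_one_add_sq_sub_sq_isBigO (hε : ε ≤ 1)
    (hk : (fun r => k r - r / √(1 + r ^ 2) - α / r ^ 3) =O[atTop] fun r => r ^ (-4 + ε)) :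
    (fun r => k r ^ 2 * (1 + r ^ 2) - r ^ 2) =O[atTop] fun r => r ^ (-1 : ℝ) := by
  refine (((one_add_sq_isBigO_rpow.mul_rpow
    (isBigO_rpow_zero_of_sub_const (by norm_num) (add_div_sqrt_half_sub_one_isBigO hε hk))
    le_rfl).mul_rpow (sub_div_sqrt_isBigO hε hk) (by norm_num)).const_mul_left 2).congr_left
    fun r => ?_
  linear_combination -div_sqrt_one_add_sq_sq_mul r

theorem half_sq_mul_one_add_sq_sub_sq_sub_div_isBigO (hε : 0 ≤ ε) (hε1 : ε ≤ 1)
    (hk : (fun r => k r - r / √(1 + r ^ 2) - α / r ^ 3) =O[atTop] fun r => r ^ (-4 + ε)) :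
    (fun r => (k r ^ 2 * (1 + r ^ 2) - r ^ 2) / 2 - α / r) =O[atTop]
      fun r => r ^ (-2 + ε) := by
  have hm1 := add_div_sqrt_half_sub_one_isBigO hε1 hk
  have hm := isBigO_rpow_zero_of_sub_const (by norm_num) hm1
  refine (((one_add_sq_isBigO_rpow.mul_rpow hm le_rfl).mul_rpow hk (by linarith)).add
    ((div_pow_isBigO_rpow α 3).mul_rpow ((one_add_sq_isBigO_rpow.mul_rpow hm1 (by norm_num)).add
      (const_isBigO_rpow_zero 1)) (by push_cast; linarith))).congr'
    ((eventually_gt_atTop 0).mono fun r hr => ?_) EventuallyEq.rfl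
  have hy := div_sqrt_one_add_sq_sq_mul r
  dsimp only
  generalize r / √(1 + r ^ 2) = y at hy ⊢
  field_simp
  linear_combination -r ^ 3 * hy

theorem div_sqrt_sub_one_sub_div_isBigO (hε : 0 ≤ ε) (hε1 : ε ≤ 1)
    (hk : (fun r => k r - r / √(1 + r ^ 2) - α / r ^ 3) =O[atTop] fun r => r ^ (-4 + ε)) :
    (fun r => k r / √((1 - k r ^ 2) * (1 + r ^ 2)) - 1 - α / r) =O[atTop]
      fun r => r ^ (-2 + ε) := by
  set w : ℝ → ℝ := fun r => k r ^ 2 * (1 + r ^ 2) - r ^ 2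
  have hw : w =O[atTop] fun r => r ^ (-1 : ℝ) := sq_mul_one_add_sq_sub_sq_isBigO hε1 hk
  have hk1 := sub_one_isBigO hε1 hk
  have hE : (fun r => (√(1 - w r))⁻¹ - 1 - w r / 2) =O[atTop] fun r => r ^ (-2 : ℝ) :=
    (inv_sqrt_one_sub_sub_isBigO.comp_tendsto
      (hw.trans_tendsto (tendsto_rpow_neg_atTop one_pos))).trans
      ((hw.mul_rpow hw (by norm_num)).congr_left fun r => (sq (w r)).symm)
  have hw_half : (fun r => 1 + w r / 2) =O[atTop] fun r => r ^ (0 : ℝ) :=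
    isBigO_rpow_zero_of_sub_const (c := 1) (by norm_num)
      ((hw.const_mul_left (1 / 2)).congr_left fun r => by ring)
  refine ((((isBigO_rpow_zero_of_sub_const (by norm_num) hk1).mul_rpow hE (by linarith)).add
    (hk1.mul_rpow hw_half (by linarith))).add
    (half_sq_mul_one_add_sq_sub_sq_sub_div_isBigO hε hε1 hk)).congr_left fun r => ?_
  rw [show (1 - k r ^ 2) * (1 + r ^ 2) = 1 - w r by ring, div_eq_mul_inv]
  ring

end Slope

theorem exists_forall_abs_sub_sub_mul_log_sub_le {φ φ' : ℝ → ℝ} {a α ε C : ℝ} (ha : 0 < a)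
    (hε : ε < 1) (hC : 0 ≤ C) (hφ : ∀ r ∈ Ici a, HasDerivWithinAt φ (φ' r) (Ici a) r)
    (hφ' : ∀ r ∈ Ici a, |φ' r - 1 - α / r| ≤ C * r ^ (-2 + ε)) :
    ∃ c, ∀ r ∈ Ici a, |φ r - r - α * log r - c| ≤ C / (1 - ε) * r ^ (-1 + ε) := by
  have hr_pos (r : ℝ) (hr : r ∈ Ici a) : 0 < r := ha.trans_le hr
  refine exists_forall_abs_sub_le_of_abs_deriv_le (convex_Ici a)
    (g' := fun r => φ' r - 1 - α / r) (m' := fun r => -(C * r ^ (-2 + ε)))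
    (fun r hr => ?_) (fun r hr => ?_) (fun r hr => by have := hr_pos r hr; positivity)
    fun r hr => by simpa using hφ' r hr
  · exact (((hφ r hr).sub (hasDerivAt_id' r).hasDerivWithinAt).sub
      ((hasDerivAt_log (hr_pos r hr).ne').const_mul α).hasDerivWithinAt).congr_deriv
      (by rw [div_eq_mul_inv])
  · refine ((hasDerivAt_rpow_const (p := -1 + ε) (Or.inl (hr_pos r hr).ne')).const_mul
      (C / (1 - ε))).hasDerivWithinAt.congr_deriv ?_
    rw [show -1 + ε - 1 = -2 + ε by ring]
    field_simp [(sub_pos.2 hε).ne']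
    ring

theorem barrier_profile_asymptotics_general
    (ε α r₀ C₀ : ℝ) (hε : 0 < ε) (hε1 : ε < 1) (hr₀ : 1 < r₀)
    (k : ℝ → ℝ) (hk_cont : ContinuousOn k (Set.Ici r₀))
    (hk_mem : ∀ r, r₀ ≤ r → k r ∈ Set.Ioo (-1 : ℝ) 1)
    (hk : ∀ r, r₀ ≤ r →
      |k r - r / Real.sqrt (1 + r ^ 2) - α / r ^ 3| ≤ C₀ * r ^ ((-4 : ℝ) + ε)) :
    (∃ C > 0, ∀ r, r₀ ≤ r →
        |k r / Real.sqrt ((1 - k r ^ 2) * (1 + r ^ 2)) - 1 - α / r|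
          ≤ C * r ^ ((-2 : ℝ) + ε)) ∧
    (∀ φ : ℝ → ℝ,
        (∀ r, r₀ ≤ r → HasDerivWithinAt φ
          (k r / Real.sqrt ((1 - k r ^ 2) * (1 + r ^ 2))) (Set.Ici r₀) r) →
        ∃ c : ℝ, ∃ C' > 0, ∀ r, r₀ ≤ r →
          |φ r - r - α * Real.log r - c| ≤ C' * r ^ ((-1 : ℝ) + ε)) := by
  have hr_pos (r : ℝ) (hr : r ∈ Ici r₀) : 0 < r := zero_lt_one.trans (hr₀.trans_le hr)
  have hk_isBigO : (fun r => k r - r / √(1 + r ^ 2) - α / r ^ 3) =O[atTop]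
      fun r => r ^ (-4 + ε) :=
    IsBigO.of_bound C₀ <| (eventually_ge_atTop r₀).mono fun r hr => by
      rw [Real.norm_eq_abs, norm_of_nonneg (rpow_pos_of_pos (hr_pos r hr) _).le]
      exact hk r hr
  have hψ_cont : ContinuousOn (fun r => k r / √((1 - k r ^ 2) * (1 + r ^ 2)) - 1 - α / r)
      (Ici r₀) :=
    ((hk_cont.div_sqrt_one_sub_sq_mul hk_mem).sub continuousOn_const).sub
      (continuousOn_const.div continuousOn_id fun r hr => (hr_pos r hr).ne')
  obtain ⟨C, hC, hbound⟩ := exists_forall_abs_le_mul_of_isBigO hψ_cont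
    (continuousOn_id.rpow_const fun r hr => Or.inl (hr_pos r hr).ne')
    (fun r hr => rpow_pos_of_pos (hr_pos r hr) _)
    (div_sqrt_sub_one_sub_div_isBigO hε.le hε1.le hk_isBigO)
  refine ⟨⟨C, hC, hbound⟩, fun φ hφ => ?_⟩
  obtain ⟨c, hc⟩ :=
    exists_forall_abs_sub_sub_mul_log_sub_le (by linarith) hε1 hC.le hφ hbound
  exact ⟨c, C / (1 - ε), div_pos hC (sub_pos.2 hε1), hc⟩

/-- Asymptotic integration step in the proof of Proposition 3.7 of the paper:
if `k : [r₀,∞) → (-1,1)` satisfies `k(r) = r/√(1+r²) + α/r³ + O(r^{-4+ε})`,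
then `ψ(r) = k(r)/√((1-k(r)²)(1+r²))` satisfies `ψ(r) = 1 + α/r + O(r^{-2+ε})`,
and consequently any antiderivative `φ` of `ψ` on `[r₀,∞)` satisfies
`φ(r) = r + α ln r + c + O(r^{-1+ε})` for some constant `c`. -/
theorem barrier_profile_asymptotics
    (ε α r₀ C₀ : ℝ) (hε : 0 < ε) (hε1 : ε < 1) (hr₀ : 1 < r₀) (hC₀ : 0 < C₀)
    (k : ℝ → ℝ) (hk_cont : ContinuousOn k (Set.Ici r₀))
    (hk_mem : ∀ r, r₀ ≤ r → k r ∈ Set.Ioo (-1 : ℝ) 1)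
    (hk : ∀ r, r₀ ≤ r →
      |k r - r / Real.sqrt (1 + r ^ 2) - α / r ^ 3| ≤ C₀ * r ^ ((-4 : ℝ) + ε)) :
    (∃ C > 0, ∀ r, r₀ ≤ r →
        |k r / Real.sqrt ((1 - k r ^ 2) * (1 + r ^ 2)) - 1 - α / r|
          ≤ C * r ^ ((-2 : ℝ) + ε)) ∧
    (∀ φ : ℝ → ℝ,
        (∀ r, r₀ ≤ r → HasDerivWithinAt φ
          (k r / Real.sqrt ((1 - k r ^ 2) * (1 + r ^ 2))) (Set.Ici r₀) r) →
        ∃ c : ℝ, ∃ C' > 0, ∀ r, r₀ ≤ r →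
          |φ r - r - α * Real.log r - c| ≤ C' * r ^ ((-1 : ℝ) + ε)) :=
  barrier_profile_asymptotics_general ε α r₀ C₀ hε hε1 hr₀ k hk_cont hk_mem hk
end

section
/- For every C > 0 there exist ρ' > 0 and B > 0, depending only on C, with the following property: every continuous function S : [0, ρ'] → [0, ∞) with S(0) = 0 satisfying S(t) ≤ C (1 + S(t))^{5/2} t for all t ∈ [0, ρ'] obeys S(t) ≤ B for all t ∈ [0, ρ']. -/
/-!
Since `S` is continuous and starts at `0`, it can only exceed `1` after passing through `1`.
At a time `s ≤ 1 / (16 C)` where `S s = 1`, the inequality would give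
`1 ≤ C 2^{5/2} s ≤ 8 C s ≤ 1/2`, so `S` stays on the branch below `1`.
-/

open Set

theorem ContinuousOn.le_of_forall_ne_on_Icc {S : ℝ → ℝ} {a ρ b : ℝ}
    (hS : ContinuousOn S (Icc a ρ)) (ha : S a ≤ b) (hne : ∀ s ∈ Icc a ρ, S s ≠ b) :
    ∀ t ∈ Icc a ρ, S t ≤ b := by
  intro t ⟨hat, htρ⟩
  by_contra! hbt
  obtain ⟨s, hs, hSs⟩ :=
    intermediate_value_Icc hat (hS.mono (Icc_subset_Icc_right htρ)) ⟨ha, hbt.le⟩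
  exact hne s ⟨hs.1, hs.2.trans htρ⟩ hSs

theorem two_rpow_five_halves_le_eight : (2 : ℝ) ^ ((5 : ℝ) / 2) ≤ 8 :=
  calc (2 : ℝ) ^ ((5 : ℝ) / 2) ≤ 2 ^ (3 : ℝ) :=
        Real.rpow_le_rpow_of_exponent_le one_le_two (by norm_num)
    _ = 8 := by norm_num

theorem mul_two_rpow_five_halves_mul_lt_one {C s : ℝ} (hC : 0 < C) (hs : s ∈ Icc 0 (1 / (16 * C))) :
    C * 2 ^ ((5 : ℝ) / 2) * s < 1 :=
  calc C * 2 ^ ((5 : ℝ) / 2) * s ≤ C * 8 * (1 / (16 * C)) := by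
        gcongr
        · exact hs.1
        · exact two_rpow_five_halves_le_eight
        · exact hs.2
    _ = 1 / 2 := by field_simp; norm_num
    _ < 1 := by norm_num

/-- Real-analysis core of Lemma 5.3 of the paper: for every `C > 0` there exist
`ρ' > 0` and `B > 0`, depending only on `C`, such that every continuous
nonnegative function `S` on `[0, ρ']` with `S(0) = 0` satisfying
`S(t) ≤ C (1 + S(t))^{5/2} t` for all `t ∈ [0, ρ']` obeys `S(t) ≤ B` on
`[0, ρ']`. -/
theorem self_improving_gradient_bound (C : ℝ) (hC : 0 < C) :
    ∃ ρ' > 0, ∃ B > 0, ∀ S : ℝ → ℝ,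
      ContinuousOn S (Set.Icc 0 ρ') →
      (∀ t ∈ Set.Icc (0 : ℝ) ρ', 0 ≤ S t) →
      S 0 = 0 →
      (∀ t ∈ Set.Icc (0 : ℝ) ρ', S t ≤ C * (1 + S t) ^ ((5 : ℝ) / 2) * t) →
      ∀ t ∈ Set.Icc (0 : ℝ) ρ', S t ≤ B := by
  refine ⟨1 / (16 * C), by positivity, 1, one_pos, fun S hS _ hS0 hineq => ?_⟩
  refine hS.le_of_forall_ne_on_Icc (hS0.trans_le zero_le_one) fun s hs hSs => ?_
  have h := hineq s hs
  rw [hSs, one_add_one_eq_two] at h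
  exact (mul_two_rpow_five_halves_mul_lt_one hC hs).not_ge h
end

section
/- Let ρ₀ > 0, C₀ > 0, C₁ > 0, and assume √C₁ ρ₀ + arctan(C₀/√C₁) < π/2, so that μ(ρ) = √C₁ tan(√C₁ ρ + arctan(C₀/√C₁)) is defined on [0, ρ₀]. Let Λ : [0, ρ₀] → ℝ be Lipschitz continuous, so that Λ is differentiable almost everywhere and Λ(ρ) = Λ(0) + ∫₀^ρ Λ'(τ) dτ, and suppose that −C₁ < −Λ'(ρ) + Λ(ρ)² < C₁ at almost every ρ ∈ [0, ρ₀]. If |Λ(0)| < C₀, then −μ(ρ) < Λ(ρ) < μ(ρ) for all ρ ∈ [0, ρ₀]. -/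
/-!
`Λ + μ` and `μ - Λ` are absolutely continuous (`Λ` is Lipschitz, `μ` is `C¹`), and almost everywhere
`(Λ + μ)' ≥ Λ² + μ² ≥ 0` and `(μ - Λ)' ≥ (μ + Λ)(μ - Λ)`. The first inequality makes `Λ + μ`
nondecreasing, hence positive. Given that, `μ - Λ` cannot reach `0`: up to its first zero its
derivative is nonnegative, so there it is still at least its positive initial value.
-/

open MeasureTheory Set

theorem AbsolutelyContinuousOnInterval.le_of_ae_hasDerivAt_nonneg {f f' : ℝ → ℝ} {a b : ℝ}
    (hf : AbsolutelyContinuousOnInterval f a b) (hab : a ≤ b)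
    (hf' : ∀ᵐ x ∂volume.restrict (Icc a b), HasDerivAt f (f' x) x ∧ 0 ≤ f' x) :
    f a ≤ f b := by
  rw [← sub_nonneg, ← hf.integral_deriv_eq_sub]
  refine intervalIntegral.integral_nonneg_of_ae_restrict hab ?_
  filter_upwards [hf'] with x ⟨hderiv, hnonneg⟩
  rw [Pi.zero_apply, hderiv.deriv]
  exact hnonneg

theorem ContinuousOn.forall_Icc_pos_of_forall_Ico_pos {g : ℝ → ℝ} {a b : ℝ}
    (hg : ContinuousOn g (Icc a b))
    (hstep : ∀ x ∈ Icc a b, (∀ y ∈ Ico a x, 0 < g y) → 0 < g x) :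
    ∀ x ∈ Icc a b, 0 < g x := by
  by_contra! hneg
  set S := Icc a b ∩ g ⁻¹' Iic 0
  have hS : IsClosed S := hg.preimage_isClosed_of_isClosed isClosed_Icc isClosed_Iic
  have hbdd : BddBelow S := ⟨a, fun x hx => hx.1.1⟩
  have hr : sInf S ∈ S := hS.csInf_mem hneg hbdd
  refine (hstep _ hr.1 fun y hy => ?_).not_ge hr.2
  by_contra! hy_nonpos
  exact hy.2.not_ge (csInf_le hbdd ⟨⟨hy.1, hy.2.le.trans hr.1.2⟩, hy_nonpos⟩)

theorem hasDerivAt_mul_tan_mul_add {s θ x : ℝ} (hx : Real.cos (s * x + θ) ≠ 0) :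
    HasDerivAt (fun x => s * Real.tan (s * x + θ)) (s ^ 2 + (s * Real.tan (s * x + θ)) ^ 2) x := by
  have hlin : HasDerivAt (fun x => s * x + θ) s x := by
    simpa using ((hasDerivAt_id x).const_mul s).add_const θ
  refine (((Real.hasDerivAt_tan hx).comp x hlin).const_mul s).congr_deriv ?_
  rw [one_div, ← Real.inv_one_add_tan_sq hx, inv_inv]
  ring

theorem contDiffAt_mul_tan_mul_add {s θ x : ℝ} {n : WithTop ℕ∞} (hx : Real.cos (s * x + θ) ≠ 0) :
    ContDiffAt ℝ n (fun x => s * Real.tan (s * x + θ)) x :=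
  contDiffAt_const.mul <| (Real.contDiffAt_tan.mpr hx).comp (g := Real.tan) x <| by fun_prop

theorem abs_lt_of_riccati_supersolution {Λ Λ' μ μ' : ℝ → ℝ} {a b C : ℝ}
    (hΛ : AbsolutelyContinuousOnInterval Λ a b) (hμ : AbsolutelyContinuousOnInterval μ a b)
    (hΛ' : ∀ᵐ x ∂volume.restrict (Icc a b),
      HasDerivAt Λ (Λ' x) x ∧ -C ≤ -Λ' x + Λ x ^ 2 ∧ -Λ' x + Λ x ^ 2 ≤ C)
    (hμ' : ∀ᵐ x ∂volume.restrict (Icc a b), HasDerivAt μ (μ' x) x ∧ -μ' x + μ x ^ 2 ≤ -C)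
    (ha : |Λ a| < μ a) :
    ∀ x ∈ Icc a b, |Λ x| < μ x := by
  have hac : ∀ x ∈ Icc a b, uIcc a x ⊆ uIcc a b := fun x hx =>
    uIcc_subset_uIcc left_mem_uIcc (Icc_subset_uIcc hx)
  have hae : ∀ x ∈ Icc a b, ∀ᵐ y ∂volume.restrict (Icc a x),
      (HasDerivAt Λ (Λ' y) y ∧ -C ≤ -Λ' y + Λ y ^ 2 ∧ -Λ' y + Λ y ^ 2 ≤ C) ∧
        HasDerivAt μ (μ' y) y ∧ -μ' y + μ y ^ 2 ≤ -C := fun x hx =>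
    ae_restrict_of_ae_restrict_of_subset (Icc_subset_Icc_right hx.2) (hΛ'.and hμ')
  have hlower : ∀ x ∈ Icc a b, 0 < Λ x + μ x := by
    intro x hx
    have hmono : Λ a + μ a ≤ Λ x + μ x := by
      refine ((hΛ.add hμ).mono (hac x hx)).le_of_ae_hasDerivAt_nonneg
        (f' := fun y => Λ' y + μ' y) hx.1 ?_
      filter_upwards [hae x hx] with y ⟨⟨hΛy, _, hΛle⟩, hμy, hμle⟩
      exact ⟨hΛy.add hμy, by nlinarith [sq_nonneg (Λ y), sq_nonneg (μ y)]⟩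
    linarith [neg_abs_le (Λ a)]
  have hupper : ∀ x ∈ Icc a b, 0 < μ x - Λ x := by
    refine ((hμ.sub hΛ).continuousOn.mono Icc_subset_uIcc).forall_Icc_pos_of_forall_Ico_pos
      fun x hx hpos => show 0 < μ x - Λ x from ?_
    have hIco : ∀ᵐ y ∂volume.restrict (Icc a x), y ∈ Ico a x := by
      rw [← Measure.restrict_congr_set Ico_ae_eq_Icc]
      exact ae_restrict_mem measurableSet_Ico
    have hmono : μ a - Λ a ≤ μ x - Λ x := by
      refine ((hμ.sub hΛ).mono (hac x hx)).le_of_ae_hasDerivAt_nonneg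
        (f' := fun y => μ' y - Λ' y) hx.1 ?_
      filter_upwards [hae x hx, hIco] with y ⟨⟨hΛy, hΛge, _⟩, hμy, hμle⟩ hy
      have hprod : 0 ≤ (μ y + Λ y) * (μ y - Λ y) :=
        (mul_pos (by linarith [hlower y ⟨hy.1, hy.2.le.trans hx.2⟩]) (hpos y hy)).le
      exact ⟨hμy.sub hΛy, by nlinarith⟩
    linarith [le_abs_self (Λ a)]
  exact fun x hx => abs_lt.mpr ⟨by linarith [hlower x hx], by linarith [hupper x hx]⟩

theorem riccati_comparison_general
    (ρ₀ C₀ C₁ : ℝ) (hC₁ : 0 < C₁)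
    (hdom : Real.sqrt C₁ * ρ₀ + Real.arctan (C₀ / Real.sqrt C₁) < Real.pi / 2)
    (Λ Λ' : ℝ → ℝ)
    (hLip : ∃ K : NNReal, LipschitzOnWith K Λ (Set.Icc 0 ρ₀))
    (hderiv : ∀ᵐ ρ ∂(volume.restrict (Set.Icc 0 ρ₀)),
        HasDerivAt Λ (Λ' ρ) ρ ∧
        -C₁ < -Λ' ρ + Λ ρ ^ 2 ∧ -Λ' ρ + Λ ρ ^ 2 < C₁)
    (h0 : |Λ 0| < C₀) :
    ∀ ρ ∈ Set.Icc (0 : ℝ) ρ₀,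
      -(Real.sqrt C₁ * Real.tan (Real.sqrt C₁ * ρ + Real.arctan (C₀ / Real.sqrt C₁)))
          < Λ ρ ∧
      Λ ρ < Real.sqrt C₁ * Real.tan (Real.sqrt C₁ * ρ + Real.arctan (C₀ / Real.sqrt C₁)) := by
  obtain ⟨K, hK⟩ := hLip
  intro ρ hρ
  set s := Real.sqrt C₁
  set μ := fun x => s * Real.tan (s * x + Real.arctan (C₀ / s))
  have hs : 0 < s := Real.sqrt_pos.mpr hC₁
  have hI : uIcc 0 ρ₀ = Icc 0 ρ₀ := uIcc_of_le (hρ.1.trans hρ.2)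
  have hcos : ∀ x ∈ Icc 0 ρ₀, Real.cos (s * x + Real.arctan (C₀ / s)) ≠ 0 := fun x hx =>
    (Real.cos_pos_of_mem_Ioo ⟨by nlinarith [Real.neg_pi_div_two_lt_arctan (C₀ / s), hx.1],
      by nlinarith [hx.2]⟩).ne'
  have hμ : ∀ x ∈ Icc 0 ρ₀, HasDerivAt μ (C₁ + μ x ^ 2) x := fun x hx => by
    rw [← Real.sq_sqrt hC₁.le]
    exact hasDerivAt_mul_tan_mul_add (hcos x hx)
  have hμ0 : μ 0 = C₀ := by
    simp only [μ, mul_zero, zero_add, Real.tan_arctan]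
    field_simp
  refine abs_lt.mp <| abs_lt_of_riccati_supersolution (C := C₁)
    (hK.mono hI.subset).absolutelyContinuousOnInterval
    (ContDiffOn.absolutelyContinuousOnInterval fun x hx =>
      (contDiffAt_mul_tan_mul_add (hcos x (hI ▸ hx))).contDiffWithinAt)
    (hderiv.mono fun x ⟨hΛx, hlow, hup⟩ => ⟨hΛx, hlow.le, hup.le⟩)
    ((ae_restrict_mem measurableSet_Icc).mono fun x hx => ⟨hμ x hx, by linarith⟩)
    (h0.trans_eq hμ0.symm) ρ hρ

/-- Riccati comparison argument from Appendix C of the paper (Proposition C.1):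
if `Λ` is Lipschitz on `[0, ρ₀]` (hence differentiable a.e. with
`Λ(ρ) = Λ(0) + ∫₀^ρ Λ'`), satisfies `-C₁ < -Λ' + Λ² < C₁` almost everywhere,
and `|Λ(0)| < C₀`, then `-μ < Λ < μ` on `[0, ρ₀]`, where
`μ(ρ) = √C₁ tan(√C₁ ρ + arctan(C₀/√C₁))` is the exact solution of
`-μ' + μ² = -C₁` with `μ(0) = C₀` (well defined on `[0, ρ₀]` since
`√C₁ ρ₀ + arctan(C₀/√C₁) < π/2`). -/
theorem riccati_comparison
    (ρ₀ C₀ C₁ : ℝ) (hρ₀ : 0 < ρ₀) (hC₀ : 0 < C₀) (hC₁ : 0 < C₁)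
    (hdom : Real.sqrt C₁ * ρ₀ + Real.arctan (C₀ / Real.sqrt C₁) < Real.pi / 2)
    (Λ Λ' : ℝ → ℝ)
    (hLip : ∃ K : NNReal, LipschitzOnWith K Λ (Set.Icc 0 ρ₀))
    (hderiv : ∀ᵐ ρ ∂(volume.restrict (Set.Icc 0 ρ₀)),
        HasDerivAt Λ (Λ' ρ) ρ ∧
        -C₁ < -Λ' ρ + Λ ρ ^ 2 ∧ -Λ' ρ + Λ ρ ^ 2 < C₁)
    (hFTC : ∀ ρ ∈ Set.Icc (0 : ℝ) ρ₀, Λ ρ = Λ 0 + ∫ τ in (0 : ℝ)..ρ, Λ' τ)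
    (h0 : |Λ 0| < C₀) :
    ∀ ρ ∈ Set.Icc (0 : ℝ) ρ₀,
      -(Real.sqrt C₁ * Real.tan (Real.sqrt C₁ * ρ + Real.arctan (C₀ / Real.sqrt C₁)))
          < Λ ρ ∧
      Λ ρ < Real.sqrt C₁ * Real.tan (Real.sqrt C₁ * ρ + Real.arctan (C₀ / Real.sqrt C₁)) :=
  riccati_comparison_general ρ₀ C₀ C₁ hC₁ hdom Λ Λ' hLip hderiv h0
end
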